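/- Let ‖·‖ be a norm on ℝⁿ whose square Φ(x) = ‖x‖² is continuously differentiable. Then Φ satisfies Φ(x+h) ≤ Φ(x) + ⟨∇Φ(x), h⟩ + κΦ(h) for all x, h ∈ ℝⁿ if and only if ∇Φ is Lipschitz continuous with constant 2κ with respect to the norm pair (‖·‖, ‖·‖_*), i.e., ‖∇Φ(x) − ∇Φ(y)‖_* ≤ 2κ‖x − y‖ for all x, y. -/

import Mathlib

/-!
(⇐) Along the segment `t ↦ x + t • h`, the function
`Φ(x + t h) - t ⟪∇Φ(x), h⟫ - κ t² Φ(h)` has derivative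
`⟪∇Φ(x + t h) - ∇Φ(x), h⟫ - 2κ t Φ(h) ≤ 0` for `t ≥ 0` by the Lipschitz bound, so its value at
`1` is at most its value at `0`.

(⇒) `Φ` is convex. Let `u` maximise `⟪∇Φ(b) - ∇Φ(a), ·⟫` on the unit ball of `‖·‖` and put
`t = ‖∇Φ(b) - ∇Φ(a)‖_* / (2κ)`. The support inequality at `a` and the smoothness inequality at
`b`, both evaluated at `b - t u`, give the Bregman bound
`Φ(b) - Φ(a) - ⟪∇Φ(a), b - a⟫ ≥ ‖∇Φ(b) - ∇Φ(a)‖_*² / (4κ)`. Adding it to its mirror image gives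
`‖∇Φ(x) - ∇Φ(y)‖_*² ≤ 2κ ⟪∇Φ(x) - ∇Φ(y), x - y⟫ ≤ 2κ ‖∇Φ(x) - ∇Φ(y)‖_* ‖x - y‖`.

Finite dimension is used only to make the unit ball of `‖·‖` compact, so that the supremum
defining `‖·‖_*` is finite and attained.
-/

open scoped RealInnerProductSpace
open Real Matrix

/-- `N` is a norm on the real vector space `E`. -/
def IsNorm {E : Type*} [AddCommGroup E] [Module ℝ E] (N : E → ℝ) : Prop :=
  (∀ x, 0 ≤ N x) ∧ (∀ x, N x = 0 ↔ x = 0) ∧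
    (∀ (c : ℝ) (x), N (c • x) = |c| * N x) ∧ ∀ x y, N (x + y) ≤ N x + N y

/-- The conjugate (dual) norm of `N`: `‖y‖_* = sup {⟨y,x⟩ : N x ≤ 1}`. -/
noncomputable def dualNorm {E : Type*} [NormedAddCommGroup E] [InnerProductSpace ℝ E]
    (N : E → ℝ) (y : E) : ℝ :=
  sSup {r | ∃ x, N x ≤ 1 ∧ r = ⟪y, x⟫}

/-- `N` is a `κ`-smooth norm: its square `Φ` is `C¹` and satisfies
`Φ(x+h) ≤ Φ(x) + ⟨∇Φ(x),h⟩ + κ Φ(h)`. -/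
def IsSmoothNorm {E : Type*} [NormedAddCommGroup E] [InnerProductSpace ℝ E] [CompleteSpace E]
    (κ : ℝ) (N : E → ℝ) : Prop :=
  IsNorm N ∧ ContDiff ℝ 1 (fun x => N x ^ 2) ∧
    ∀ x h, N (x + h) ^ 2 ≤
      N x ^ 2 + ⟪gradient (fun z => N z ^ 2) x, h⟫ + κ * N h ^ 2

/-- `N` is a `(κ,ς)`-regular norm: within factor `ς` of a `κ`-smooth norm. -/
def IsRegularNorm {E : Type*} [NormedAddCommGroup E] [InnerProductSpace ℝ E] [CompleteSpace E]
    (κ ς : ℝ) (N : E → ℝ) : Prop :=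
  ∃ M : E → ℝ, IsSmoothNorm κ M ∧ ∀ x, ς⁻¹ * M x ≤ N x ∧ N x ≤ ς * M x

namespace IsNorm

section Algebraic

variable {E : Type*} [AddCommGroup E] [Module ℝ E] {N : E → ℝ}

lemma nonneg (hN : IsNorm N) (x : E) : 0 ≤ N x := hN.1 x

lemma eq_zero_iff (hN : IsNorm N) {x : E} : N x = 0 ↔ x = 0 := hN.2.1 x

lemma map_smul (hN : IsNorm N) (c : ℝ) (x : E) : N (c • x) = |c| * N x := hN.2.2.1 c x

lemma add_le (hN : IsNorm N) (x y : E) : N (x + y) ≤ N x + N y := hN.2.2.2 x y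

lemma map_smul_of_nonneg (hN : IsNorm N) {c : ℝ} (hc : 0 ≤ c) (x : E) :
    N (c • x) = c * N x := by
  rw [hN.map_smul, abs_of_nonneg hc]

lemma map_zero (hN : IsNorm N) : N 0 = 0 := hN.eq_zero_iff.mpr rfl

lemma pos_of_ne_zero (hN : IsNorm N) {x : E} (hx : x ≠ 0) : 0 < N x :=
  (hN.nonneg x).lt_of_ne fun h => hx (hN.eq_zero_iff.mp h.symm)

lemma map_neg (hN : IsNorm N) (x : E) : N (-x) = N x := by
  simpa using hN.map_smul (-1) x

lemma convexOn (hN : IsNorm N) : ConvexOn ℝ Set.univ N :=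
  ⟨convex_univ, fun x _ y _ a b ha hb _ => by
    simpa only [smul_eq_mul, hN.map_smul_of_nonneg ha, hN.map_smul_of_nonneg hb]
      using hN.add_le (a • x) (b • y)⟩

lemma convexOn_sq (hN : IsNorm N) : ConvexOn ℝ Set.univ (fun x => N x ^ 2) :=
  hN.convexOn.pow (fun x _ => hN.nonneg x) 2

end Algebraic

variable {E : Type*} [NormedAddCommGroup E] [InnerProductSpace ℝ E] {N : E → ℝ}

lemma dualNorm_neg (hN : IsNorm N) (y : E) : dualNorm N (-y) = dualNorm N y := by
  unfold dualNorm
  congr 1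
  ext r
  constructor <;>
  · rintro ⟨x, hx, rfl⟩
    exact ⟨-x, by rwa [hN.map_neg], by simp⟩

lemma dualNorm_eq_sSup_image (y : E) : dualNorm N y = sSup ((⟪y, ·⟫) '' {x | N x ≤ 1}) := by
  simp only [dualNorm, Set.image, Set.mem_ofPred_eq, eq_comm]

variable [FiniteDimensional ℝ E]

lemma continuous (hN : IsNorm N) : Continuous N :=
  continuousOn_univ.mp (hN.convexOn.continuousOn isOpen_univ)

lemma exists_pos_mul_norm_le (hN : IsNorm N) : ∃ c > 0, ∀ x, c * ‖x‖ ≤ N x := by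
  rcases subsingleton_or_nontrivial E with hE | hE
  · exact ⟨1, one_pos, fun x => by simp [Subsingleton.elim x 0, hN.map_zero]⟩
  obtain ⟨x₀, hx₀, hmin⟩ := (isCompact_sphere (0 : E) 1).exists_isMinOn
    (NormedSpace.sphere_nonempty.mpr zero_le_one) hN.continuous.continuousOn
  have hx₀ : x₀ ≠ 0 := ne_zero_of_mem_unit_sphere ⟨x₀, hx₀⟩
  refine ⟨N x₀, hN.pos_of_ne_zero hx₀, fun x => ?_⟩
  rcases eq_or_ne x 0 with rfl | hx
  · simp [hN.map_zero]
  have hxpos : 0 < ‖x‖ := norm_pos_iff.mpr hx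
  have := hmin (a := ‖x‖⁻¹ • x) (by simp [norm_smul, hxpos.ne'])
  rwa [Set.mem_ofPred_eq, hN.map_smul_of_nonneg (inv_nonneg.mpr hxpos.le),
    le_inv_mul_iff₀ hxpos, mul_comm] at this

lemma isCompact_setOf_le_one (hN : IsNorm N) : IsCompact {x : E | N x ≤ 1} := by
  obtain ⟨c, hc, hle⟩ := hN.exists_pos_mul_norm_le
  refine Metric.isCompact_of_isClosed_isBounded (isClosed_le hN.continuous continuous_const)
    ((Metric.isBounded_iff_subset_closedBall 0).mpr ⟨c⁻¹, fun x hx => ?_⟩)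
  rw [mem_closedBall_zero_iff, ← mul_one c⁻¹, le_inv_mul_iff₀ hc]
  exact (hle x).trans hx

lemma isCompact_image_inner (hN : IsNorm N) (y : E) :
    IsCompact ((⟪y, ·⟫) '' {x | N x ≤ 1}) :=
  hN.isCompact_setOf_le_one.image (continuous_const.inner continuous_id)

lemma exists_inner_eq_dualNorm (hN : IsNorm N) (y : E) :
    ∃ u, N u ≤ 1 ∧ ⟪y, u⟫ = dualNorm N y := by
  rw [dualNorm_eq_sSup_image]
  exact (hN.isCompact_image_inner y).sSup_mem ⟨_, 0, by simp [hN.map_zero], rfl⟩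

lemma inner_le_dualNorm_mul (hN : IsNorm N) (y x : E) : ⟪y, x⟫ ≤ dualNorm N y * N x := by
  rcases eq_or_ne x 0 with rfl | hx
  · simp [hN.map_zero]
  have hNx : 0 < N x := hN.pos_of_ne_zero hx
  have hunit : N ((N x)⁻¹ • x) ≤ 1 := by
    rw [hN.map_smul_of_nonneg (inv_nonneg.mpr hNx.le), inv_mul_cancel₀ hNx.ne']
  have : ⟪y, (N x)⁻¹ • x⟫ ≤ dualNorm N y := by
    rw [dualNorm_eq_sSup_image]
    exact le_csSup (hN.isCompact_image_inner y).bddAbove ⟨_, hunit, rfl⟩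
  rwa [real_inner_smul_right, inv_mul_le_iff₀ hNx, mul_comm] at this

end IsNorm

section Calculus

variable {E : Type*} [NormedAddCommGroup E] [InnerProductSpace ℝ E] [CompleteSpace E]
  {f : E → ℝ}

lemma HasGradientAt.hasDerivAt_comp_add_smul {g x v : E} {t : ℝ}
    (hf : HasGradientAt f g (x + t • v)) :
    HasDerivAt (fun s : ℝ => f (x + s • v)) ⟪g, v⟫ t := by
  have hline : HasDerivAt (fun s : ℝ => x + s • v) v t := by
    simpa using ((hasDerivAt_id t).smul_const v).const_add x
  exact hf.hasFDerivAt.comp_hasDerivAt t hline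

lemma ConvexOn.add_inner_sub_le_of_hasGradientAt {g x : E} (hconv : ConvexOn ℝ Set.univ f)
    (hf : HasGradientAt f g x) (z : E) : f x + ⟪g, z - x⟫ ≤ f z := by
  have hline : ConvexOn ℝ Set.univ (fun t : ℝ => f (x + t • (z - x))) := by
    have heq : f ∘ AffineMap.lineMap x z = fun t : ℝ => f (x + t • (z - x)) := by
      funext t
      rw [Function.comp_apply, AffineMap.lineMap_apply_module', add_comm]
    simpa only [heq, Set.preimage_univ] using hconv.comp_affineMap (AffineMap.lineMap x z)
  have hderiv : HasDerivAt (fun t : ℝ => f (x + t • (z - x))) ⟪g, z - x⟫ 0 :=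
    HasGradientAt.hasDerivAt_comp_add_smul (by simpa using hf)
  have := hline.le_slope_of_hasDerivAt (Set.mem_univ 0) (Set.mem_univ 1) zero_lt_one hderiv
  simp only [slope_def_field, one_smul, add_sub_cancel, zero_smul, add_zero, sub_zero,
    div_one] at this
  linarith

end Calculus

namespace IsNorm

variable {E : Type*} [NormedAddCommGroup E] [InnerProductSpace ℝ E] [FiniteDimensional ℝ E]
  {N : E → ℝ} {f : E → ℝ} {κ : ℝ}

lemma le_add_inner_add_of_dualNorm_gradient_sub_le (hN : IsNorm N) (hf : Differentiable ℝ f)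
    (hL : ∀ x y, dualNorm N (gradient f x - gradient f y) ≤ 2 * κ * N (x - y)) (x h : E) :
    f (x + h) ≤ f x + ⟪gradient f x, h⟫ + κ * N h ^ 2 := by
  let φ : ℝ → ℝ := fun t => f (x + t • h) - t * ⟪gradient f x, h⟫ - κ * t ^ 2 * N h ^ 2
  let φ' : ℝ → ℝ := fun t =>
    ⟪gradient f (x + t • h), h⟫ - ⟪gradient f x, h⟫ - 2 * κ * t * N h ^ 2
  have hφ (t : ℝ) : HasDerivAt φ (φ' t) t := by
    have := (((hf _).hasGradientAt.hasDerivAt_comp_add_smul (x := x) (v := h) (t := t)).sub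
      ((hasDerivAt_id t).mul_const ⟪gradient f x, h⟫)).sub
      (((hasDerivAt_pow 2 t).const_mul κ).mul_const (N h ^ 2))
    refine this.congr_deriv ?_
    simp only [φ', Nat.cast_ofNat, Nat.reduceSub, pow_one]
    ring
  have hφ' (t : ℝ) (ht : 0 ≤ t) : φ' t ≤ 0 := by
    have := calc ⟪gradient f (x + t • h) - gradient f x, h⟫
        ≤ dualNorm N (gradient f (x + t • h) - gradient f x) * N h := hN.inner_le_dualNorm_mul _ _
      _ ≤ 2 * κ * N (x + t • h - x) * N h := by gcongr; exacts [hN.nonneg h, hL _ _]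
      _ = 2 * κ * t * N h ^ 2 := by
        rw [add_sub_cancel_left, hN.map_smul_of_nonneg ht]; ring
    simp only [φ', inner_sub_left] at this ⊢
    linarith
  have hanti : AntitoneOn φ (Set.Ici 0) :=
    antitoneOn_of_hasDerivWithinAt_nonpos (convex_Ici 0)
      (HasDerivAt.continuousOn fun t _ => hφ t) (fun t _ => (hφ t).hasDerivWithinAt)
      fun t ht => hφ' t (interior_subset ht)
  have h0 : φ 0 = f x := by simp [φ]
  have h1 : φ 1 = f (x + h) - ⟪gradient f x, h⟫ - κ * N h ^ 2 := by simp [φ]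
  have := hanti (Set.mem_Ici.2 le_rfl) (Set.mem_Ici.2 zero_le_one) zero_le_one
  rw [h0, h1] at this
  linarith

lemma dualNorm_gradient_sub_sq_div_le (hN : IsNorm N) (hκ : 0 < κ)
    (hconv : ConvexOn ℝ Set.univ f) (hf : Differentiable ℝ f)
    (hsmooth : ∀ x h, f (x + h) ≤ f x + ⟪gradient f x, h⟫ + κ * N h ^ 2) (a b : E) :
    dualNorm N (gradient f b - gradient f a) ^ 2 / (4 * κ) ≤
      f b - f a - ⟪gradient f a, b - a⟫ := by
  obtain ⟨u, hu, hD⟩ := hN.exists_inner_eq_dualNorm (gradient f b - gradient f a)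
  set D := dualNorm N (gradient f b - gradient f a)
  set t := D / (2 * κ) with ht
  have hsupport := hconv.add_inner_sub_le_of_hasGradientAt (hf a).hasGradientAt (b - t • u)
  have hupper := hsmooth b (-(t • u))
  have hNtu : N (-(t • u)) ^ 2 ≤ t ^ 2 := by
    rw [hN.map_neg, hN.map_smul, mul_pow, sq_abs]
    exact mul_le_of_le_one_right (sq_nonneg t) (pow_le_one₀ (hN.nonneg u) hu)
  rw [← sub_eq_add_neg, inner_neg_right, real_inner_smul_right] at hupper
  rw [sub_right_comm, inner_sub_right, real_inner_smul_right] at hsupport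
  have htD : t * D = t * ⟪gradient f b, u⟫ - t * ⟪gradient f a, u⟫ := by
    rw [← hD, inner_sub_left, mul_sub]
  calc D ^ 2 / (4 * κ) = t * D - κ * t ^ 2 := by rw [ht]; field_simp; ring
    _ ≤ f b - f a - ⟪gradient f a, b - a⟫ := by
      linarith [mul_le_mul_of_nonneg_left hNtu hκ.le]

lemma dualNorm_gradient_sub_sq_le_inner (hN : IsNorm N) (hκ : 0 < κ)
    (hconv : ConvexOn ℝ Set.univ f) (hf : Differentiable ℝ f)
    (hsmooth : ∀ x h, f (x + h) ≤ f x + ⟪gradient f x, h⟫ + κ * N h ^ 2) (x y : E) :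
    dualNorm N (gradient f x - gradient f y) ^ 2 ≤
      2 * κ * ⟪gradient f x - gradient f y, x - y⟫ := by
  have hxy := hN.dualNorm_gradient_sub_sq_div_le hκ hconv hf hsmooth x y
  have hyx := hN.dualNorm_gradient_sub_sq_div_le hκ hconv hf hsmooth y x
  rw [← neg_sub, hN.dualNorm_neg] at hxy
  have hsum : ⟪gradient f x - gradient f y, x - y⟫ =
      -⟪gradient f x, y - x⟫ - ⟪gradient f y, x - y⟫ := by
    simp only [inner_sub_left, inner_sub_right]
    ring
  rw [hsum, ← div_le_iff₀' (by positivity)]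
  calc _ = dualNorm N (gradient f x - gradient f y) ^ 2 / (4 * κ) * 2 := by field_simp; ring
    _ ≤ _ := by linarith

lemma dualNorm_gradient_sub_le_of_smooth (hN : IsNorm N) (hκ : 0 < κ)
    (hconv : ConvexOn ℝ Set.univ f) (hf : Differentiable ℝ f)
    (hsmooth : ∀ x h, f (x + h) ≤ f x + ⟪gradient f x, h⟫ + κ * N h ^ 2) (x y : E) :
    dualNorm N (gradient f x - gradient f y) ≤ 2 * κ * N (x - y) := by
  set D := dualNorm N (gradient f x - gradient f y)
  have hcoco := hN.dualNorm_gradient_sub_sq_le_inner hκ hconv hf hsmooth x y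
  have hinner := hN.inner_le_dualNorm_mul (gradient f x - gradient f y) (x - y)
  rcases le_or_gt D 0 with hD | hD
  · exact hD.trans (mul_nonneg (by positivity) (hN.nonneg _))
  · nlinarith

end IsNorm

/-- for a norm with continuously differentiable square `Φ`,
the inequality `Φ(x+h) ≤ Φ(x) + ⟨∇Φ(x),h⟩ + κΦ(h)` holds for all `x, h`
iff `∇Φ` is Lipschitz with constant `2κ` w.r.t. the pair `(‖·‖, ‖·‖_*)`. -/
theorem stmt_2 {n : ℕ} (κ : ℝ) (hκ : 1 ≤ κ)
    (N : EuclideanSpace ℝ (Fin n) → ℝ) (hN : IsNorm N)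
    (hC : ContDiff ℝ 1 (fun x => N x ^ 2)) :
    (∀ x h, N (x + h) ^ 2 ≤
        N x ^ 2 + ⟪gradient (fun z => N z ^ 2) x, h⟫ + κ * N h ^ 2) ↔
      (∀ x y, dualNorm N
          (gradient (fun z => N z ^ 2) x - gradient (fun z => N z ^ 2) y) ≤
        2 * κ * N (x - y)) := by
  have hdiff := hC.differentiable one_ne_zero
  exact ⟨hN.dualNorm_gradient_sub_le_of_smooth (by linarith) hN.convexOn_sq hdiff,
    hN.le_add_inner_add_of_dualNorm_gradient_sub_le hdiff⟩
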